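/- Let γ₀ = [[0,1],[1,0]], γ₁ = [[0,−1],[1,0]] ∈ M₂(ℂ), and set γ⁰ := γ₀ and γ¹ := −γ₁. On C^∞(ℝ², ℂ²) with coordinates (t, x) define two formal power series of differential operators: the contraction Dirac operator with λ^n-coefficient (D^contr)_n ψ := i [ γ⁰ ((−i/2)^n/n!) (x∂_x)^n ∂_t ψ + γ¹ ((i/2)^n/n!) (t∂_t)^n ∂_x ψ ], and the Aschieri–Castellani Dirac operator with λ^n-coefficient (D^AC)_n ψ := i Σ_{m+k=n} [ s⁻_m γ⁰ ((−i/2)^k/k!) (x∂_x)^k ∂_t ψ + s⁺_m γ¹ ((i/2)^k/k!) (t∂_t)^k ∂_x ψ ], where s∓_m are the Taylor coefficients of the complex functions e^{∓iλ/2}/cos(λ/2) at λ = 0. Then for every smooth ψ: (D^AC)_1 ψ − (D^contr)_1 ψ = (1/2)(γ⁰ ∂_t ψ − γ¹ ∂_x ψ), and there exists ψ ∈ C^∞(ℝ², ℂ²) for which this difference is nonzero. Hence the two formal power series of operators D^AC and D^contr are distinct. -/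

import Mathlib

open scoped BigOperators

noncomputable section

/-- Spinor fields on the plane `ℝ²` with coordinates `(t, x)`. -/
abbrev QPField : Type := (ℝ × ℝ) → (Fin 2 → ℂ)

/-- The time derivative `∂_t`. -/
def dT2 (f : QPField) : QPField := fun p => deriv (fun s => f (s, p.2)) p.1

/-- The spatial derivative `∂_x`. -/
def dX2 (f : QPField) : QPField := fun p => deriv (fun s => f (p.1, s)) p.2

/-- The vector field `t ∂_t` acting on spinor fields. -/
def tdT (f : QPField) : QPField := fun p => ((p.1 : ℂ)) • dT2 f p

/-- The vector field `x ∂_x` acting on spinor fields. -/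
def xdX (f : QPField) : QPField := fun p => ((p.2 : ℂ)) • dX2 f p

/-- The gamma-matrix `γ₀ = [[0,1],[1,0]]`. -/
def gam0 : Matrix (Fin 2) (Fin 2) ℂ := !![0, 1; 1, 0]

/-- The gamma-matrix `γ₁ = [[0,−1],[1,0]]`. -/
def gam1 : Matrix (Fin 2) (Fin 2) ℂ := !![0, -1; 1, 0]

/-- `γ⁰ := γ₀`. -/
def gamUp0 : Matrix (Fin 2) (Fin 2) ℂ := gam0

/-- `γ¹ := −γ₁`. -/
def gamUp1 : Matrix (Fin 2) (Fin 2) ℂ := -gam1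

/-- The `λⁿ`-coefficient of the contraction Dirac operator on the quantum plane:
`(D^contr)ₙ ψ = i [ γ⁰ ((−i/2)ⁿ/n!) (x∂_x)ⁿ ∂_t ψ + γ¹ ((i/2)ⁿ/n!) (t∂_t)ⁿ ∂_x ψ ]`. -/
def diracContrCoeff (n : ℕ) (ψ : QPField) : QPField :=
  fun p => Complex.I •
    (((-(Complex.I) / 2) ^ n / (n.factorial : ℂ)) • gamUp0.mulVec (xdX^[n] (dT2 ψ) p) +
      ((Complex.I / 2) ^ n / (n.factorial : ℂ)) • gamUp1.mulVec (tdT^[n] (dX2 ψ) p))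

/-- The `λⁿ`-coefficient of the Aschieri–Castellani Dirac operator on the quantum plane, with
`s∓` the Taylor coefficients of `e^{∓iλ/2}/cos(λ/2)`:
`(D^AC)ₙ ψ = i Σ_{m+k=n} [ s⁻_m γ⁰ ((−i/2)ᵏ/k!) (x∂_x)ᵏ ∂_t ψ
                            + s⁺_m γ¹ ((i/2)ᵏ/k!) (t∂_t)ᵏ ∂_x ψ ]`. -/
def diracACCoeff (sm sp : ℕ → ℂ) (n : ℕ) (ψ : QPField) : QPField :=
  fun p => Complex.I •
    ∑ q ∈ Finset.HasAntidiagonal.antidiagonal n,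
      (sm q.1 • ((-(Complex.I) / 2) ^ q.2 / (q.2.factorial : ℂ)) •
          gamUp0.mulVec (xdX^[q.2] (dT2 ψ) p) +
        sp q.1 • ((Complex.I / 2) ^ q.2 / (q.2.factorial : ℂ)) •
          gamUp1.mulVec (tdT^[q.2] (dX2 ψ) p))

/-- The formal exponential power series `Σₙ cⁿ λⁿ/n! ∈ ℂ[[λ]]`. -/
def expPS (c : ℂ) : PowerSeries ℂ := PowerSeries.mk fun n => c ^ n / n.factorial

/-- The Taylor series of `cos(λ/2)` at `λ = 0`. -/
def cosHalfPS : PowerSeries ℂ :=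
  PowerSeries.mk fun n =>
    if n % 2 = 0 then ((-1 : ℂ)) ^ (n / 2) * (1 / 2) ^ n / n.factorial else 0

/-- On the quantum plane, the Aschieri–Castellani and the contraction Dirac
operators (as formal power series of differential operators) differ already at first order in
the deformation parameter: `(D^AC)₁ψ − (D^contr)₁ψ = (1/2)(γ⁰ ∂_t ψ − γ¹ ∂_x ψ)` for every
smooth `ψ`, this difference is nonzero for some smooth `ψ`, and hence the two formal power
series of operators are distinct.  Here `s∓` are the Taylor coefficients of
`e^{∓iλ/2}/cos(λ/2)` at `λ = 0`, characterized by the formal power series identities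
`(Σ s∓ₘ λᵐ)·cos(λ/2) = e^{∓iλ/2}`. -/
theorem quantum_plane_dirac_operators_differ (sm sp : ℕ → ℂ)
    (hsm : PowerSeries.mk sm * cosHalfPS = expPS (-(Complex.I / 2)))
    (hsp : PowerSeries.mk sp * cosHalfPS = expPS (Complex.I / 2)) :
    (∀ ψ : QPField, ContDiff ℝ (⊤ : ℕ∞) ψ → ∀ p : ℝ × ℝ,
        diracACCoeff sm sp 1 ψ p - diracContrCoeff 1 ψ p =
          (1 / 2 : ℂ) • (gamUp0.mulVec (dT2 ψ p) - gamUp1.mulVec (dX2 ψ p))) ∧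
      (∃ ψ : QPField, ContDiff ℝ (⊤ : ℕ∞) ψ ∧ ∃ p : ℝ × ℝ,
        diracACCoeff sm sp 1 ψ p - diracContrCoeff 1 ψ p ≠ 0) ∧
      (fun (n : ℕ) (ψ : QPField) => diracACCoeff sm sp n ψ) ≠
        (fun (n : ℕ) (ψ : QPField) => diracContrCoeff n ψ) := by
  have h0m := congrArg (PowerSeries.coeff 0) hsm
  have h1m := congrArg (PowerSeries.coeff 1) hsm
  have h0p := congrArg (PowerSeries.coeff 0) hsp
  have h1p := congrArg (PowerSeries.coeff 1) hsp
  simp [PowerSeries.coeff_mul, cosHalfPS, expPS, Finset.Nat.antidiagonal_succ] at h0m h1m h0p h1p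
  have hsm1 : sm 1 = -(Complex.I/2) := by simpa [h0m] using h1m
  have hsp1 : sp 1 = Complex.I/2 := by simpa [h0p] using h1p
  have key : ∀ ψ : QPField, ∀ p : ℝ × ℝ,
      diracACCoeff sm sp 1 ψ p - diracContrCoeff 1 ψ p =
        (1 / 2 : ℂ) • (gamUp0.mulVec (dT2 ψ p) - gamUp1.mulVec (dX2 ψ p)) := by
    intro ψ p
    have hanti : (Finset.HasAntidiagonal.antidiagonal 1 : Finset (ℕ × ℕ)) = {(0,1),(1,0)} := by decide
    simp only [diracACCoeff, diracContrCoeff, hanti, Finset.sum_insert, Finset.mem_singleton,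
      Finset.sum_singleton, Function.iterate_one, Function.iterate_zero, id_eq,
      pow_one, pow_zero, Nat.factorial_one, Nat.factorial_zero, Nat.cast_one,
      h0m, h0p, hsm1, hsp1, Prod.mk.injEq, not_false_eq_true, and_false, one_ne_zero]
    match_scalars <;> ring_nf <;> norm_num [Complex.I_sq]
  -- witness
  set ψ₀ : QPField := fun p => ![(p.1 : ℂ), 0] with hψ₀
  have hdT : ∀ p : ℝ × ℝ, dT2 ψ₀ p = ![(1 : ℂ), 0] := by
    intro p
    have h : HasDerivAt (fun s : ℝ => (![(s : ℂ), 0] : Fin 2 → ℂ)) ![(1 : ℂ), 0] p.1 := by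
      rw [hasDerivAt_pi]
      intro i
      fin_cases i
      · simpa using (show HasDerivAt (fun s : ℝ => (s : ℂ)) 1 p.1 from Complex.ofRealCLM.hasDerivAt (x := p.1))
      · simpa using (hasDerivAt_const p.1 (0 : ℂ))
    simpa [dT2, hψ₀] using h.deriv
  have hdX : ∀ p : ℝ × ℝ, dX2 ψ₀ p = 0 := by
    intro p
    simp [dX2, hψ₀, deriv_const]
  have hsmooth : ContDiff ℝ (⊤ : ℕ∞) ψ₀ := by
    rw [contDiff_pi]
    intro i
    fin_cases i
    · simpa [hψ₀] using (show
        ContDiff ℝ (⊤ : ℕ∞) fun p : ℝ × ℝ => ((p.1 : ℂ)) from Complex.ofRealCLM.contDiff.comp contDiff_fst)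
    · simpa [hψ₀] using (contDiff_const : ContDiff ℝ (⊤ : ℕ∞) fun _ : ℝ × ℝ => (0 : ℂ))
  have hne : diracACCoeff sm sp 1 ψ₀ (0, 0) - diracContrCoeff 1 ψ₀ (0, 0) ≠ 0 := by
    rw [key ψ₀ (0, 0), hdT, hdX]
    intro h
    have := congrFun h 1
    simp [gamUp0, gamUp1, gam0, gam1, Matrix.mulVec, dotProduct, Fin.sum_univ_two] at this
  refine ⟨fun ψ _ p => key ψ p, ⟨ψ₀, hsmooth, (0, 0), hne⟩, ?_⟩
  intro h
  have h1 := congrFun (congrFun (congrFun (congrFun h 1) ψ₀) (0, 0)) 1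
  apply hne
  have : diracACCoeff sm sp 1 ψ₀ (0, 0) = diracContrCoeff 1 ψ₀ (0, 0) :=
    congrFun (congrFun (congrFun h 1) ψ₀) (0, 0)
  exact sub_eq_zero_of_eq this
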